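/- arXiv:math/0611676 — 5 statements merged into one kernel-verified Lean document; each statement's English description precedes it below -/
import Mathlib

section
/- For the symmetric case p = 1/2, the function W(i) = (1/3)(N-i)(N+i) satisfies the system: W(1) = 1 + W(2); W(i) = 1 + ((i+1)/(2i))·W(i+1) + ((i-1)/(2i))·W(i-1) for 2 ≤ i ≤ N-1; and W(N) = 0. -/
/- The quadratic (N² - x²)/3 satisfies the interior recursion at every real x ≠ 0, since
(x+1)³ + (x-1)³ = 2x³ + 6x. At x = 1 the weight (x-1)/(2x) of the lower neighbour vanishes,
so the boundary equation W 1 = 1 + W 2 is the interior one at i = 1. -/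

lemma quadratic_conditional_bets_step (N x : ℝ) (hx : x ≠ 0) :
    1 / 3 * (N - x) * (N + x) =
      1 + (x + 1) / (2 * x) * (1 / 3 * (N - (x + 1)) * (N + (x + 1))) +
        (x - 1) / (2 * x) * (1 / 3 * (N - (x - 1)) * (N + (x - 1))) := by
  field_simp
  ring

theorem stmt_6 (N : ℕ) (W : ℕ → ℝ)
    (hW : ∀ i, W i = (1/3) * ((N : ℝ) - i) * ((N : ℝ) + i)) :
    W 1 = 1 + W 2 ∧
    (∀ i, 2 ≤ i → i ≤ N - 1 →
      W i = 1 + (((i : ℝ) + 1) / (2 * i)) * W (i+1) + (((i : ℝ) - 1) / (2 * i)) * W (i-1)) ∧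
    W N = 0 := by
  refine ⟨?_, fun i hi _ => ?_, by simp [hW]⟩
  · simpa [hW, one_add_one_eq_two] using quadratic_conditional_bets_step N 1 one_ne_zero
  · have hi0 : (i : ℝ) ≠ 0 := by positivity
    rw [hW, hW, hW, Nat.cast_sub (by omega : 1 ≤ i)]
    push_cast
    exact quadratic_conditional_bets_step N i hi0
end

section
/- For r ≠ 1, r > 0, the function W(i) = ((r+1)/(r-1))·[N·(r^N+1)/(r^N-1) - i·(r^i+1)/(r^i-1)] satisfies: W(1) = 1 + W(2); W(i) = 1 + (1/(r+1))·((r^{i+1}-1)/(r^i-1))·W(i+1) + (r/(r+1))·((r^{i-1}-1)/(r^i-1))·W(i-1) for 2 ≤ i ≤ N-1; and W(N) = 0. -/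
/-!
Write `φ(i) = i (rⁱ + 1)/(rⁱ - 1)`, so that `W(i) = (r+1)/(r-1) · (φ(N) - φ(i))`.
The two Bayes coefficients sum to `1`, and their weighted average of `φ(i+1)` and `φ(i-1)`
exceeds `φ(i)` by exactly `(r-1)/(r+1)`; the constant `(r+1)/(r-1)` is chosen to turn this
excess into the one bet spent.
-/

namespace GamblersRuin

variable {r : ℝ}

noncomputable def potential (r : ℝ) (i : ℕ) : ℝ := i * (r ^ i + 1) / (r ^ i - 1)

noncomputable def expectedBets (r : ℝ) (N i : ℕ) : ℝ :=
  (r + 1) / (r - 1) * (potential r N - potential r i)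

lemma pow_sub_one_ne_zero (hr : 0 < r) (hr1 : r ≠ 1) {m : ℕ} (hm : m ≠ 0) : r ^ m - 1 ≠ 0 :=
  sub_ne_zero.mpr fun h => hr1 ((pow_eq_one_iff_of_nonneg hr.le hm).mp h)

/-- At `i = 0` both sides vanish, although `potential r 0` is a junk value `0 / 0`. -/
lemma pow_sub_one_mul_potential (hr : 0 < r) (hr1 : r ≠ 1) (i : ℕ) :
    (r ^ i - 1) * potential r i = i * (r ^ i + 1) := by
  rcases eq_or_ne i 0 with rfl | hi
  · simp [potential]
  · exact mul_div_cancel₀ _ (pow_sub_one_ne_zero hr hr1 hi)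

lemma winProb_up_add_down (hr : 0 < r) (hr1 : r ≠ 1) {i : ℕ} (hi : 1 ≤ i) :
    1 / (r + 1) * ((r ^ (i + 1) - 1) / (r ^ i - 1))
      + r / (r + 1) * ((r ^ (i - 1) - 1) / (r ^ i - 1)) = 1 := by
  obtain ⟨n, rfl⟩ := Nat.exists_eq_add_of_le' hi
  have hpow := pow_sub_one_ne_zero hr hr1 n.succ_ne_zero
  have hr_add_one : r + 1 ≠ 0 := by positivity
  simp only [Nat.add_sub_cancel]
  field_simp
  ring

lemma potential_average (hr : 0 < r) (hr1 : r ≠ 1) {i : ℕ} (hi : 1 ≤ i) :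
    1 / (r + 1) * ((r ^ (i + 1) - 1) / (r ^ i - 1)) * potential r (i + 1)
      + r / (r + 1) * ((r ^ (i - 1) - 1) / (r ^ i - 1)) * potential r (i - 1)
      = potential r i + (r - 1) / (r + 1) := by
  obtain ⟨n, rfl⟩ := Nat.exists_eq_add_of_le' hi
  have hup := pow_sub_one_mul_potential hr hr1 (n + 2)
  have hdown := pow_sub_one_mul_potential hr hr1 n
  have hpow := pow_sub_one_ne_zero hr hr1 n.succ_ne_zero
  have hr_add_one : r + 1 ≠ 0 := by positivity
  simp only [Nat.add_sub_cancel]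
  calc 1 / (r + 1) * ((r ^ (n + 1 + 1) - 1) / (r ^ (n + 1) - 1)) * potential r (n + 1 + 1)
        + r / (r + 1) * ((r ^ n - 1) / (r ^ (n + 1) - 1)) * potential r n
      = ((r ^ (n + 2) - 1) * potential r (n + 2) + r * ((r ^ n - 1) * potential r n))
          / ((r + 1) * (r ^ (n + 1) - 1)) := by
        field_simp
    _ = potential r (n + 1) + (r - 1) / (r + 1) := by
        rw [hup, hdown]
        unfold potential
        field_simp
        push_cast
        ring

lemma expectedBets_recurrence (hr : 0 < r) (hr1 : r ≠ 1) (N : ℕ) {i : ℕ} (hi : 1 ≤ i) :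
    expectedBets r N i =
      1 + 1 / (r + 1) * ((r ^ (i + 1) - 1) / (r ^ i - 1)) * expectedBets r N (i + 1)
      + r / (r + 1) * ((r ^ (i - 1) - 1) / (r ^ i - 1)) * expectedBets r N (i - 1) := by
  have hsum := winProb_up_add_down hr hr1 hi
  have havg := potential_average hr hr1 hi
  have hc : (r + 1) / (r - 1) * ((r - 1) / (r + 1)) = 1 := by
    have : r - 1 ≠ 0 := sub_ne_zero.mpr hr1
    field_simp
  unfold expectedBets
  linear_combination (-(r + 1) / (r - 1) * potential r N) * hsum + (r + 1) / (r - 1) * havg + hc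

end GamblersRuin

open GamblersRuin in
theorem stmt_7 (r : ℝ) (hr : 0 < r) (hr1 : r ≠ 1) (N : ℕ) (W : ℕ → ℝ)
    (hW : ∀ i, W i = (r + 1) / (r - 1) *
      ((N : ℝ) * (r ^ N + 1) / (r ^ N - 1) - (i : ℝ) * (r ^ i + 1) / (r ^ i - 1))) :
    W 1 = 1 + W 2 ∧
    (∀ i, 2 ≤ i → i ≤ N - 1 →
      W i = 1 + (1 / (r + 1)) * ((r ^ (i+1) - 1) / (r ^ i - 1)) * W (i+1)
              + (r / (r + 1)) * ((r ^ (i-1) - 1) / (r ^ i - 1)) * W (i-1)) ∧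
    W N = 0 := by
  obtain rfl : W = expectedBets r N := funext hW
  refine ⟨?_, fun i hi _ => expectedBets_recurrence hr hr1 N (by omega), ?_⟩
  · -- at `i = 1` the down coefficient vanishes and the up coefficient is `1`
    have hr1' : r - 1 ≠ 0 := sub_ne_zero.mpr hr1
    have hstep := expectedBets_recurrence hr hr1 N le_rfl
    norm_num at hstep
    rwa [show (r ^ 2 - 1) / (r - 1) = r + 1 by field_simp; ring,
      inv_mul_cancel₀ (by positivity), one_mul] at hstep
  · simp [expectedBets]
end

section
/- For r ≠ 1, r > 0, 0 < i < N, the total-expectation identity E(i) = P(i)·W(i) + (1 - P(i))·B(i) holds, where P(i) = (r^i-1)/(r^N-1), E(i) = ((r+1)/(r-1))·(i - N·P(i)), W(i) = ((r+1)/(r-1))·[N·(r^N+1)/(r^N-1) - i·(r^i+1)/(r^i-1)], and B(i) = ((r+1)/(r-1))·[N·(r^N+1)/(r^N-1) - (N-i)·(r^{N-i}+1)/(r^{N-i}-1)]. -/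
/-- With `x = rⁱ`, `y = r^(N-i)`, `a = i`, `b = N - i`, the total-expectation identity, stripped
of the common factor `(r + 1)/(r - 1)`; both sides have denominator `xy - 1` and numerator
`a(xy - 1) - b(x - 1)`. -/
theorem gamblersRuin_total_expectation_normalized {K : Type*} [Field K] (a b x y : K)
    (hx : x ≠ 1) (hy : y ≠ 1) (hxy : x * y ≠ 1) :
    a - (a + b) * ((x - 1) / (x * y - 1)) =
      (x - 1) / (x * y - 1) * ((a + b) * (x * y + 1) / (x * y - 1) - a * (x + 1) / (x - 1)) +
        (1 - (x - 1) / (x * y - 1)) *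
          ((a + b) * (x * y + 1) / (x * y - 1) - b * (y + 1) / (y - 1)) := by
  have hx' : x - 1 ≠ 0 := sub_ne_zero.mpr hx
  have hy' : y - 1 ≠ 0 := sub_ne_zero.mpr hy
  have hxy' : x * y - 1 ≠ 0 := sub_ne_zero.mpr hxy
  field_simp
  ring

theorem stmt_9 (r : ℝ) (hr : 0 < r) (hr1 : r ≠ 1) (N i : ℕ) (h1 : 0 < i) (h2 : i < N)
    (P E W B : ℝ)
    (hP : P = (r ^ i - 1) / (r ^ N - 1))
    (hE : E = (r + 1) / (r - 1) * ((i : ℝ) - (N : ℝ) * P))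
    (hW : W = (r + 1) / (r - 1) *
      ((N : ℝ) * (r ^ N + 1) / (r ^ N - 1) - (i : ℝ) * (r ^ i + 1) / (r ^ i - 1)))
    (hB : B = (r + 1) / (r - 1) *
      ((N : ℝ) * (r ^ N + 1) / (r ^ N - 1)
        - ((N : ℝ) - i) * (r ^ (N - i) + 1) / (r ^ (N - i) - 1))) :
    E = P * W + (1 - P) * B := by
  have pow_ne_one {k : ℕ} (hk : 0 < k) : r ^ k ≠ 1 :=
    fun h => hr1 ((pow_eq_one_iff_of_nonneg hr.le hk.ne').mp h)
  have hN : r ^ N = r ^ i * r ^ (N - i) := (pow_mul_pow_sub r h2.le).symm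
  have key := gamblersRuin_total_expectation_normalized (i : ℝ) ((N : ℝ) - i) (r ^ i) (r ^ (N - i))
    (pow_ne_one h1) (pow_ne_one (Nat.sub_pos_of_lt h2)) (hN ▸ pow_ne_one (h1.trans h2))
  rw [add_sub_cancel] at key
  subst hP hE hW hB
  rw [hN, key]
  ring
end

section
/- For r ≠ 1, r > 0, the probability of covering all vertices before returning to the origin, P{A} = ((r-1)/(r+1))·(r^m+1)/(r^m-1), is strictly greater than 1/m for every m ≥ 2, and its limit as r → 1 equals 1/m. -/
/-!
Cancelling `r - 1` against `r ^ m - 1 = (r - 1)(1 + r + ⋯ + r ^ (m - 1))` turns the probability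
into `(r ^ m + 1) / ((r + 1)(1 + r + ⋯ + r ^ (m - 1)))`, which is continuous at `r = 1` with value
`2 / (2m)`. Moreover `(r + 1)(1 + ⋯ + r ^ (m - 1)) = ∑_{j<m} (r ^ j + r ^ (m - j))`, and each pair
satisfies `r ^ j + r ^ (m - j) ≤ 1 + r ^ m` because `(1 - r ^ j)(1 - r ^ (m - j)) ≥ 0`, strictly
when `0 < j < m` and `r ≠ 1`; summing gives the strict inequality against `1 / m`.
-/

open Finset Filter Topology

lemma add_one_mul_geom_sum {R : Type*} [CommSemiring R] (r : R) (m : ℕ) :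
    (r + 1) * ∑ j ∈ range m, r ^ j = ∑ j ∈ range m, (r ^ j + r ^ (m - j)) := by
  have hshift : r * ∑ j ∈ range m, r ^ j = ∑ j ∈ range m, r ^ (m - j) := by
    rw [mul_sum, ← sum_range_reflect]
    refine sum_congr rfl fun j hj => ?_
    rw [← pow_succ']
    congr 1
    have := mem_range.1 hj
    omega
  rw [add_mul, one_mul, hshift, sum_add_distrib, add_comm]

section OrderedRing

variable {R : Type*} [CommRing R] [LinearOrder R] [IsStrictOrderedRing R] {r : R}

lemma pow_add_pow_le_one_add_pow_add (hr : 0 ≤ r) (j k : ℕ) :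
    r ^ j + r ^ k ≤ 1 + r ^ (j + k) := by
  have hprod : 0 ≤ (1 - r ^ j) * (1 - r ^ k) := by
    rcases le_total r 1 with h | h
    · exact mul_nonneg (sub_nonneg.2 (pow_le_one₀ hr h)) (sub_nonneg.2 (pow_le_one₀ hr h))
    · exact mul_nonneg_of_nonpos_of_nonpos (sub_nonpos.2 (one_le_pow₀ h))
        (sub_nonpos.2 (one_le_pow₀ h))
  rw [pow_add]
  linear_combination hprod

lemma pow_add_pow_lt_one_add_pow_add (hr : 0 ≤ r) (hr1 : r ≠ 1) {j k : ℕ} (hj : j ≠ 0)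
    (hk : k ≠ 0) : r ^ j + r ^ k < 1 + r ^ (j + k) := by
  have hprod : 0 < (1 - r ^ j) * (1 - r ^ k) := by
    rcases hr1.lt_or_gt with h | h
    · exact mul_pos (sub_pos.2 (pow_lt_one₀ hr h hj)) (sub_pos.2 (pow_lt_one₀ hr h hk))
    · exact mul_pos_of_neg_of_neg (sub_neg.2 (one_lt_pow₀ h hj)) (sub_neg.2 (one_lt_pow₀ h hk))
  rw [pow_add]
  linear_combination hprod

lemma add_one_mul_geom_sum_lt (hr : 0 ≤ r) (hr1 : r ≠ 1) {m : ℕ} (hm : 2 ≤ m) :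
    (r + 1) * ∑ j ∈ range m, r ^ j < m * (1 + r ^ m) := by
  have hpair : ∀ j ≤ m, r ^ j + r ^ (m - j) ≤ 1 + r ^ m := fun j hj => by
    simpa [Nat.add_sub_cancel' hj] using pow_add_pow_le_one_add_pow_add hr j (m - j)
  have hpair₁ : r ^ 1 + r ^ (m - 1) < 1 + r ^ m := by
    simpa [Nat.add_sub_cancel' (by omega : 1 ≤ m)] using
      pow_add_pow_lt_one_add_pow_add hr hr1 one_ne_zero (by omega : m - 1 ≠ 0)
  calc (r + 1) * ∑ j ∈ range m, r ^ j = ∑ j ∈ range m, (r ^ j + r ^ (m - j)) :=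
        add_one_mul_geom_sum r m
    _ < ∑ j ∈ range m, (1 + r ^ m) :=
        sum_lt_sum (fun j hj => hpair j (mem_range.1 hj).le) ⟨1, mem_range.2 (by omega), hpair₁⟩
    _ = m * (1 + r ^ m) := by rw [sum_const, card_range, nsmul_eq_mul]

end OrderedRing

lemma div_mul_div_eq_div_mul_geom_sum {K : Type*} [Field K] {r : K} (hr1 : r ≠ 1) (m : ℕ) :
    (r - 1) / (r + 1) * (r ^ m + 1) / (r ^ m - 1) =
      (r ^ m + 1) / ((r + 1) * ∑ j ∈ range m, r ^ j) := by
  have hr1' : r - 1 ≠ 0 := sub_ne_zero.2 hr1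
  rw [← mul_geom_sum, div_mul_eq_mul_div, div_div, mul_left_comm, mul_div_mul_left _ _ hr1']

lemma tendsto_div_add_one_mul_geom_sum {m : ℕ} (hm : m ≠ 0) :
    Tendsto (fun r : ℝ => (r ^ m + 1) / ((r + 1) * ∑ j ∈ range m, r ^ j)) (𝓝 1) (𝓝 (1 / m)) := by
  have hcont : ContinuousAt (fun r : ℝ => (r ^ m + 1) / ((r + 1) * ∑ j ∈ range m, r ^ j)) 1 :=
    ContinuousAt.div (by fun_prop) (by fun_prop) (by simp [hm])
  convert hcont.tendsto using 2
  simp only [one_pow, sum_const, card_range, nsmul_eq_mul, mul_one]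
  field_simp

theorem stmt_13 (m : ℕ) (hm : 2 ≤ m) :
    (∀ r : ℝ, 0 < r → r ≠ 1 →
      ((r - 1) / (r + 1)) * (r ^ m + 1) / (r ^ m - 1) > 1 / m) ∧
    Filter.Tendsto (fun r : ℝ => ((r - 1) / (r + 1)) * (r ^ m + 1) / (r ^ m - 1))
      (nhdsWithin 1 {1}ᶜ) (nhds (1 / m)) := by
  refine ⟨fun r hr hr1 => ?_, ?_⟩
  · have hden : 0 < (r + 1) * ∑ j ∈ range m, r ^ j :=
      mul_pos (by positivity) (geom_sum_pos hr.le (by omega))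
    rw [div_mul_div_eq_div_mul_geom_sum hr1, gt_iff_lt, div_lt_div_iff₀ (by positivity) hden,
      one_mul, add_comm (r ^ m), mul_comm _ (m : ℝ)]
    exact add_one_mul_geom_sum_lt hr.le hr1 hm
  · refine (tendsto_div_add_one_mul_geom_sum (by omega)).mono_left nhdsWithin_le_nhds |>.congr' ?_
    filter_upwards [self_mem_nhdsWithin] with r hr1
    exact (div_mul_div_eq_div_mul_geom_sum hr1 m).symm
end

section
/- For r ≠ 1, r > 0, the weighted sum ∑_{i=1}^{m} P{L_i}·v_i equals ((r+1)/(r-1))·[m - 1/(r-1) - m²/(r^m - 1) + (m+1)²/(r^{m+1} - 1)], where P{L_i} = r^{m-i}(r-1)/(r^m-1) and v_i = ((r+1)/(r-1))·[m + i - 1 - 2/(r-1) + 2m/(r^m-1) - (m+1)(r^i-1)/(r^{m+1}-1)]. -/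
open Finset

section Moments

variable {R : Type*} [CommRing R]

theorem sum_Icc_mul_pow_sub_succ (g : ℕ → R) (x : R) (m : ℕ) :
    ∑ i ∈ Icc 1 (m + 1), g i * x ^ (m + 1 - i) = x * ∑ i ∈ Icc 1 m, g i * x ^ (m - i) + g (m + 1) := by
  rw [sum_Icc_succ_top (by omega), Nat.sub_self, pow_zero, mul_one, mul_sum]
  congr 1
  refine sum_congr rfl fun i hi => ?_
  rw [Nat.sub_add_comm (mem_Icc.mp hi).2, pow_succ]
  ring

theorem sum_Icc_pow_sub_mul_sub_one (x : R) (m : ℕ) :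
    (∑ i ∈ Icc 1 m, x ^ (m - i)) * (x - 1) = x ^ m - 1 := by
  induction m with
  | zero => simp
  | succ m ih =>
    have h := sum_Icc_mul_pow_sub_succ (fun _ => (1 : R)) x m
    simp only [one_mul] at h
    rw [h, pow_succ]
    linear_combination x * ih

theorem sum_Icc_mul_pow_sub_mul_sub_one_sq (x : R) (m : ℕ) :
    (∑ i ∈ Icc 1 m, (i : R) * x ^ (m - i)) * (x - 1) ^ 2 = x ^ (m + 1) - (m + 1) * x + m := by
  induction m with
  | zero => simp
  | succ m ih =>
    rw [sum_Icc_mul_pow_sub_succ (fun i => (i : R)), pow_succ x (m + 1)]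
    push_cast
    linear_combination x * ih

end Moments

theorem stmt_18_general (r : ℝ) (hr : 0 < r) (hr1 : r ≠ 1) (m : ℕ) :
    ∑ i ∈ Finset.Icc 1 m,
        (r ^ (m - i) * (r - 1) / (r ^ m - 1)) *
        ((r + 1) / (r - 1) *
          ((m : ℝ) + i - 1 - 2 / (r - 1) + 2 * m / (r ^ m - 1)
            - (m + 1) * (r ^ i - 1) / (r ^ (m + 1) - 1)))
      = (r + 1) / (r - 1) *
          ((m : ℝ) - 1 / (r - 1) - (m : ℝ) ^ 2 / (r ^ m - 1)
            + ((m : ℝ) + 1) ^ 2 / (r ^ (m + 1) - 1)) := by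
  rcases Nat.eq_zero_or_pos m with rfl | hm
  · -- both sides vanish, the right one through `(r ^ 0 - 1)⁻¹ = 0`
    simp
  have hr_sub : r - 1 ≠ 0 := sub_ne_zero.mpr hr1
  have hA : r ^ m - 1 ≠ 0 := sub_ne_zero.mpr ((pow_eq_one_iff_of_nonneg hr.le hm.ne').not.mpr hr1)
  have hB : r ^ (m + 1) - 1 ≠ 0 :=
    sub_ne_zero.mpr ((pow_eq_one_iff_of_nonneg hr.le m.succ_ne_zero).not.mpr hr1)
  -- `v i` is affine in `i` and `r ^ i`, so only three moments of the weights `r ^ (m - i)` enter.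
  have hS0 : ∑ i ∈ Icc 1 m, r ^ (m - i) = (r ^ m - 1) / (r - 1) :=
    eq_div_of_mul_eq hr_sub (sum_Icc_pow_sub_mul_sub_one r m)
  have hS1 : ∑ i ∈ Icc 1 m, (i : ℝ) * r ^ (m - i) = (r ^ (m + 1) - (m + 1) * r + m) / (r - 1) ^ 2 :=
    eq_div_of_mul_eq (pow_ne_zero 2 hr_sub) (sum_Icc_mul_pow_sub_mul_sub_one_sq r m)
  have hS2 : ∑ i ∈ Icc 1 m, r ^ (m - i) * r ^ i = m * r ^ m := by
    rw [sum_congr rfl fun i hi => pow_sub_mul_pow r (mem_Icc.mp hi).2]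
    simp
  set c : ℝ := (m : ℝ) - 1 - 2 / (r - 1) + 2 * m / (r ^ m - 1) + (m + 1) / (r ^ (m + 1) - 1) with hc
  calc _ = (r + 1) / (r ^ m - 1) * (c * ∑ i ∈ Icc 1 m, r ^ (m - i)
          + ∑ i ∈ Icc 1 m, (i : ℝ) * r ^ (m - i)
          - (m + 1) / (r ^ (m + 1) - 1) * ∑ i ∈ Icc 1 m, r ^ (m - i) * r ^ i) := by
        simp only [mul_sum, ← sum_add_distrib, ← sum_sub_distrib]
        refine sum_congr rfl fun i _ => ?_
        rw [hc]
        field_simp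
        ring
    _ = _ := by
        rw [hS0, hS1, hS2, hc]
        field_simp
        ring

theorem stmt_18 (r : ℝ) (hr : 0 < r) (hr1 : r ≠ 1) (m : ℕ) (hm : 1 ≤ m) :
    ∑ i ∈ Finset.Icc 1 m,
        (r ^ (m - i) * (r - 1) / (r ^ m - 1)) *
        ((r + 1) / (r - 1) *
          ((m : ℝ) + i - 1 - 2 / (r - 1) + 2 * m / (r ^ m - 1)
            - (m + 1) * (r ^ i - 1) / (r ^ (m + 1) - 1)))
      = (r + 1) / (r - 1) *
          ((m : ℝ) - 1 / (r - 1) - (m : ℝ) ^ 2 / (r ^ m - 1)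
            + ((m : ℝ) + 1) ^ 2 / (r ^ (m + 1) - 1)) :=
  stmt_18_general r hr hr1 m
end
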